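/- Let α, β, γ be positive definite Hermitian forms (metrics) on an n-dimensional complex vector space. Then (Λ_α β)·(Λ_β γ) ≥ Λ_α γ, where Λ_α β denotes the trace of β with respect to α (i.e. the sum of eigenvalues of β relative to α). -/

import Mathlib

/-!
Conjugating by `S = √B` turns `Tr(A⁻¹B)`, `Tr(B⁻¹C)` and `Tr(A⁻¹C)` into `Tr X`, `Tr Y` and
`Tr(XY)` for the positive semidefinite matrices `X = S A⁻¹ S` and `Y = S⁻¹ C S⁻¹`.
Writing `X = MᴴM` and `Y = NᴴN`, one has `Tr(XY) = ‖N Mᴴ‖²` in the Frobenius norm, so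
submultiplicativity of that norm gives `Tr(XY) ≤ ‖M‖² ‖N‖² = Tr X · Tr Y`.
-/

open scoped ComplexOrder MatrixOrder
open Matrix

namespace Matrix

variable {𝕜 m n : Type*} [RCLike 𝕜] [Fintype m] [Fintype n]

section Frobenius

attribute [local instance] frobeniusSeminormedAddCommGroup

lemma re_trace_conjTranspose_mul_self (M : Matrix m n 𝕜) :
    RCLike.re (Mᴴ * M).trace = ‖M‖ ^ 2 := by
  rw [frobenius_norm_def, ← Real.rpow_natCast, ← Real.rpow_mul (by positivity), Finset.sum_comm]
  simp only [trace, diag, mul_apply, conjTranspose_apply, RCLike.star_def, RCLike.conj_mul,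
    map_sum]
  norm_num

lemma re_trace_mul_le_of_posSemidef {X Y : Matrix n n 𝕜} (hX : X.PosSemidef)
    (hY : Y.PosSemidef) : RCLike.re (X * Y).trace ≤ RCLike.re X.trace * RCLike.re Y.trace := by
  classical
  obtain ⟨M, rfl⟩ := CStarAlgebra.nonneg_iff_eq_star_mul_self.mp hX.nonneg
  obtain ⟨N, rfl⟩ := CStarAlgebra.nonneg_iff_eq_star_mul_self.mp hY.nonneg
  simp only [star_eq_conjTranspose]
  have hcycle : (Mᴴ * M * (Nᴴ * N)).trace = ((N * Mᴴ)ᴴ * (N * Mᴴ)).trace := by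
    rw [conjTranspose_mul, conjTranspose_conjTranspose, ← trace_mul_cycle, mul_assoc, mul_assoc,
      mul_assoc]
  rw [hcycle, re_trace_conjTranspose_mul_self, re_trace_conjTranspose_mul_self,
    re_trace_conjTranspose_mul_self, ← mul_pow, mul_comm ‖M‖, ← frobenius_norm_conjTranspose M]
  gcongr
  exact frobenius_norm_mul N Mᴴ

end Frobenius

lemma re_trace_mul_le_re_trace_mul_mul_re_trace_inv_mul [DecidableEq n] {P B C : Matrix n n 𝕜}
    (hP : P.PosSemidef) (hB : B.PosDef) (hC : C.PosSemidef) :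
    RCLike.re (P * C).trace ≤ RCLike.re (P * B).trace * RCLike.re (B⁻¹ * C).trace := by
  set S := CFC.sqrt B
  have hS : S.IsHermitian := (CFC.sqrt_nonneg B).posSemidef.isHermitian
  have hSS : S * S = B := CFC.sqrt_mul_sqrt_self B hB.posSemidef.nonneg
  have hSdet : IsUnit S.det :=
    (isUnit_iff_isUnit_det S).mp <| (CFC.isUnit_sqrt_iff B hB.posSemidef.nonneg).mpr hB.isUnit
  have hX : (S * P * S).PosSemidef := by
    simpa only [hS.eq] using hP.mul_mul_conjTranspose_same S
  have hY : (S⁻¹ * C * S⁻¹).PosSemidef := by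
    simpa only [hS.inv.eq] using hC.mul_mul_conjTranspose_same S⁻¹
  have hPB : (S * P * S).trace = (P * B).trace := by
    rw [trace_mul_cycle, hSS, trace_mul_comm]
  have hBC : (S⁻¹ * C * S⁻¹).trace = (B⁻¹ * C).trace := by
    rw [trace_mul_cycle, ← hSS, mul_inv_rev]
  have hPC : (S * P * S * (S⁻¹ * C * S⁻¹)).trace = (P * C).trace := by
    rw [show S * P * S * (S⁻¹ * C * S⁻¹) = S * (P * C) * S⁻¹ by
      simp only [← mul_assoc, mul_nonsing_inv_cancel_right _ _ hSdet],
      trace_mul_cycle, nonsing_inv_mul S hSdet, one_mul]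
  rw [← hPB, ← hBC, ← hPC]
  exact re_trace_mul_le_of_posSemidef hX hY

end Matrix

/-- Trace product inequality: for positive definite Hermitian matrices A, B, C,
    Tr(A⁻¹B) · Tr(B⁻¹C) ≥ Tr(A⁻¹C). -/
theorem trace_prod_ineq {n : ℕ} {A B C : Matrix (Fin n) (Fin n) ℂ}
    (hA : A.PosDef) (hB : B.PosDef) (hC : C.PosDef) :
    ((A⁻¹ * B).trace).re * ((B⁻¹ * C).trace).re ≥ ((A⁻¹ * C).trace).re :=
  re_trace_mul_le_re_trace_mul_mul_re_trace_inv_mul hA.inv.posSemidef hB hC.posSemidef
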